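/- The map dist(x,y) = ‖v_{xy}‖²_{H_E}, where v_{xy} is the dipole reproducing the difference u(x) − u(y), defines a metric on the vertex set V (the resistance distance). -/

import Mathlib

open scoped BigOperators

/-- Energy form `E(u,v) = (1/2) Σ_{x,y} c_{xy}(u(x)-u(y))(v(x)-v(y))`. -/
noncomputable def energy {V : Type*} (c : V → V → ℝ) (u v : V → ℝ) : ℝ :=
  (1 / 2) * ∑' p : V × V, c p.1 p.2 * (u p.1 - u p.2) * (v p.1 - v p.2)

/-- `u` has finite energy. -/
def FiniteEnergy {V : Type*} (c : V → V → ℝ) (u : V → ℝ) : Prop :=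
  Summable fun p : V × V => c p.1 p.2 * (u p.1 - u p.2) * (u p.1 - u p.2)

/-- Graph Laplacian `(Δu)(x) = Σ_y c_{xy}(u(x)-u(y))`. -/
noncomputable def lap {V : Type*} (c : V → V → ℝ) (u : V → ℝ) (x : V) : ℝ :=
  ∑' y, c x y * (u x - u y)

/-- Total conductance `c(x) = Σ_y c_{xy}`. -/
noncomputable def cTot {V : Type*} (c : V → V → ℝ) (x : V) : ℝ := ∑' y, c x y

/-- Dirac delta at `x`. -/
noncomputable def delta {V : Type*} [DecidableEq V] (x : V) : V → ℝ :=
  fun z => if z = x then 1 else 0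

/-- Connectedness: any two vertices are joined by a finite path of positive-conductance edges. -/
def GraphConnected {V : Type*} (c : V → V → ℝ) : Prop :=
  ∀ x y : V, ∃ (n : ℕ) (p : ℕ → V), p 0 = x ∧ p n = y ∧ ∀ i < n, 0 < c (p i) (p (i + 1))

/-!
The dipole `v_{xy}` is characterised by `E(v_{xy}, u) = u(x) - u(y)`, so
`d(x,y) = v_{xy}(x) - v_{xy}(y)`, and the symmetry of `E` gives the reciprocity
`v_{xz}(x) - v_{xz}(y) = v_{xy}(x) - v_{xy}(z)`. This yields the symmetry of `d` and the splitting
`d(x,y) = (v_{xz}(x) - v_{xz}(y)) + (v_{zy}(x) - v_{zy}(y))`; the triangle inequality then follows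
from the maximum principle `v_{xz}(z) ≤ v_{xz} ≤ v_{xz}(x)`. For the latter, clamping `v_{xz}` to
that interval does not raise its energy and does not change its pairing with `v_{xz}`, so the
difference has zero energy and is constant on the connected graph. Definiteness: a dipole of zero
energy pairs to zero with every function, in particular with `δ_x`.
-/

section

variable {V : Type*} {c : V → V → ℝ}

theorem energy_comm (u w : V → ℝ) : energy c u w = energy c w u := by
  unfold energy
  congr 1
  exact tsum_congr fun p => by ring

theorem energy_term_self_nonneg (hnn : ∀ x y, 0 ≤ c x y) (u : V → ℝ) (p : V × V) :
    0 ≤ c p.1 p.2 * (u p.1 - u p.2) * (u p.1 - u p.2) := by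
  rw [mul_assoc]
  exact mul_nonneg (hnn _ _) (mul_self_nonneg _)

theorem energy_self_nonneg (hnn : ∀ x y, 0 ≤ c x y) (u : V → ℝ) : 0 ≤ energy c u u :=
  mul_nonneg (by norm_num) (tsum_nonneg (energy_term_self_nonneg hnn u))

theorem FiniteEnergy.summable_mul (hnn : ∀ x y, 0 ≤ c x y) {u w : V → ℝ}
    (hu : FiniteEnergy c u) (hw : FiniteEnergy c w) :
    Summable fun p : V × V => c p.1 p.2 * (u p.1 - u p.2) * (w p.1 - w p.2) := by
  refine Summable.of_norm_bounded ((Summable.add hu hw).mul_left (1 / 2)) fun p => ?_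
  have hc := hnn p.1 p.2
  set a := u p.1 - u p.2
  set b := w p.1 - w p.2
  rw [Real.norm_eq_abs, abs_mul, abs_mul, abs_of_nonneg hc]
  nlinarith [mul_nonneg hc (sq_nonneg (|a| - |b|)), abs_mul_abs_self a, abs_mul_abs_self b]

theorem FiniteEnergy.sub (hnn : ∀ x y, 0 ≤ c x y) {u w : V → ℝ}
    (hu : FiniteEnergy c u) (hw : FiniteEnergy c w) : FiniteEnergy c (u - w) :=
  ((Summable.sub hu ((hu.summable_mul hnn hw).mul_left 2)).add hw).congr fun p => by
    simp only [Pi.sub_apply]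
    ring

theorem energy_sub_sub (hnn : ∀ x y, 0 ≤ c x y) {f g : V → ℝ}
    (hf : FiniteEnergy c f) (hg : FiniteEnergy c g) :
    energy c (f - g) (f - g) = energy c f f - 2 * energy c f g + energy c g g := by
  have hsum := (Summable.hasSum hf).sub ((hf.summable_mul hnn hg).hasSum.mul_left 2)
    |>.add (Summable.hasSum hg)
  rw [energy, (hsum.congr_fun fun p => by simp only [Pi.sub_apply]; ring).tsum_eq]
  simp only [energy]
  ring

theorem energy_term_le_of_abs_sub_le (hnn : ∀ x y, 0 ≤ c x y) {f g : V → ℝ}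
    (hgf : ∀ s t, |g s - g t| ≤ |f s - f t|) (p : V × V) :
    c p.1 p.2 * (g p.1 - g p.2) * (g p.1 - g p.2) ≤
      c p.1 p.2 * (f p.1 - f p.2) * (f p.1 - f p.2) := by
  rw [mul_assoc, mul_assoc]
  exact mul_le_mul_of_nonneg_left (abs_le_iff_mul_self_le.mp (hgf _ _)) (hnn _ _)

theorem FiniteEnergy.of_abs_sub_le (hnn : ∀ x y, 0 ≤ c x y) {f g : V → ℝ}
    (hf : FiniteEnergy c f) (hgf : ∀ s t, |g s - g t| ≤ |f s - f t|) : FiniteEnergy c g :=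
  Summable.of_nonneg_of_le (energy_term_self_nonneg hnn g)
    (energy_term_le_of_abs_sub_le hnn hgf) hf

theorem energy_self_le_of_abs_sub_le (hnn : ∀ x y, 0 ≤ c x y) {f g : V → ℝ}
    (hf : FiniteEnergy c f) (hgf : ∀ s t, |g s - g t| ≤ |f s - f t|) :
    energy c g g ≤ energy c f f :=
  mul_le_mul_of_nonneg_left (Summable.tsum_le_tsum (energy_term_le_of_abs_sub_le hnn hgf)
    (hf.of_abs_sub_le hnn hgf) hf) (by norm_num)

theorem mul_sub_eq_zero_of_energy_self_eq_zero (hnn : ∀ x y, 0 ≤ c x y) {u : V → ℝ}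
    (hu : FiniteEnergy c u) (h0 : energy c u u = 0) (a b : V) : c a b * (u a - u b) = 0 := by
  have hsum : HasSum (fun p : V × V => c p.1 p.2 * (u p.1 - u p.2) * (u p.1 - u p.2)) 0 := by
    convert Summable.hasSum hu
    simpa [energy, eq_comm] using h0
  have hab := congrFun ((hasSum_zero_iff_of_nonneg (energy_term_self_nonneg hnn u)).mp hsum) (a, b)
  simp only [Pi.zero_apply] at hab
  exact pow_eq_zero_iff two_ne_zero |>.mp (by linear_combination c a b * hab)

theorem energy_eq_zero_of_energy_self_eq_zero (hnn : ∀ x y, 0 ≤ c x y) {u : V → ℝ}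
    (hu : FiniteEnergy c u) (h0 : energy c u u = 0) (w : V → ℝ) : energy c u w = 0 := by
  simp only [energy, mul_sub_eq_zero_of_energy_self_eq_zero hnn hu h0, zero_mul, tsum_zero,
    mul_zero]

theorem GraphConnected.eq_of_forall_mul_sub_eq_zero (hconn : GraphConnected c) {u : V → ℝ}
    (hu : ∀ a b, c a b * (u a - u b) = 0) (x y : V) : u x = u y := by
  obtain ⟨n, p, rfl, rfl, hp⟩ := hconn x y
  suffices ∀ i ≤ n, u (p 0) = u (p i) from this n le_rfl
  intro i hi
  induction i with
  | zero => rfl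
  | succ i ih =>
    rw [ih (by omega)]
    exact sub_eq_zero.mp ((mul_eq_zero.mp (hu _ _)).resolve_left (hp i hi).ne')

theorem eq_of_energy_self_eq_zero (hnn : ∀ x y, 0 ≤ c x y) (hconn : GraphConnected c)
    {u : V → ℝ} (hu : FiniteEnergy c u) (h0 : energy c u u = 0) (x y : V) : u x = u y :=
  hconn.eq_of_forall_mul_sub_eq_zero (mul_sub_eq_zero_of_energy_self_eq_zero hnn hu h0) x y

theorem finiteEnergy_delta [DecidableEq V] (hsym : ∀ x y, c x y = c y x)
    (hloc : ∀ x, (Function.support (c x)).Finite) (x : V) : FiniteEnergy c (delta x) := by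
  refine summable_of_ne_finset_zero
    (s := {x} ×ˢ (hloc x).toFinset ∪ (hloc x).toFinset ×ˢ {x}) ?_
  rintro ⟨a, b⟩ hab
  by_cases ha : a = x <;> by_cases hb : b = x <;> simp_all [delta, hsym a x]

/-- `f` is a dipole `v_{ab}` in the paper's notation. -/
def IsDipole (c : V → V → ℝ) (f : V → ℝ) (a b : V) : Prop :=
  FiniteEnergy c f ∧ ∀ u, FiniteEnergy c u → energy c f u = u a - u b

namespace IsDipole

variable {f g h : V → ℝ} {a b x y z : V}

theorem energy_self (hf : IsDipole c f a b) : energy c f f = f a - f b :=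
  hf.2 f hf.1

theorem reciprocity (hf : IsDipole c f a b) (hg : IsDipole c g x y) :
    f x - f y = g a - g b := by
  rw [← hg.2 f hf.1, energy_comm, hf.2 g hg.1]

theorem mem_Icc (hnn : ∀ x y, 0 ≤ c x y) (hconn : GraphConnected c) (hf : IsDipole c f a b)
    (s : V) : f s ∈ Set.Icc (f b) (f a) := by
  have hba : f b ≤ f a := sub_nonneg.mp (hf.energy_self ▸ energy_self_nonneg hnn f)
  set g : V → ℝ := fun t => max (min (f t) (f a)) (f b) with hg_def
  have hgf : ∀ s t, |g s - g t| ≤ |f s - f t| := fun s t =>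
    (abs_max_sub_max_le_abs _ _ _).trans <| (abs_min_sub_min_le_max _ _ _ _).trans <| by simp
  have hg : FiniteEnergy c g := hf.1.of_abs_sub_le hnn hgf
  have hga : g a = f a := by simp [hg_def, hba]
  have hgb : g b = f b := by simp [hg_def, hba]
  have hfg : energy c f g = energy c f f := by rw [hf.2 g hg, hf.energy_self, hga, hgb]
  have h0 : energy c (f - g) (f - g) = 0 := by
    linarith [energy_sub_sub hnn hf.1 hg, energy_self_le_of_abs_sub_le hnn hf.1 hgf,
      energy_self_nonneg hnn (f - g)]
  have hfs : f s = g s := by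
    simpa [hga, sub_eq_zero] using eq_of_energy_self_eq_zero hnn hconn (hf.1.sub hnn hg) h0 s a
  rw [hfs]
  exact ⟨le_max_right _ _, max_le (min_le_right _ _) hba⟩

theorem energy_self_le_add (hnn : ∀ x y, 0 ≤ c x y) (hconn : GraphConnected c)
    (hxy : IsDipole c f x y) (hxz : IsDipole c g x z) (hzy : IsDipole c h z y) :
    energy c f f ≤ energy c g g + energy c h h := by
  rw [hxy.energy_self, hxz.energy_self, hzy.energy_self]
  linarith [hxz.reciprocity hxy, hzy.reciprocity hxy, (hxz.mem_Icc hnn hconn y).1,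
    (hzy.mem_Icc hnn hconn x).2]

theorem eq_of_energy_self_eq_zero (hnn : ∀ x y, 0 ≤ c x y) (hsym : ∀ x y, c x y = c y x)
    (hloc : ∀ x, (Function.support (c x)).Finite) (hf : IsDipole c f x y)
    (h0 : energy c f f = 0) : x = y := by
  classical
  by_contra hxy
  have h := hf.2 (delta x) (finiteEnergy_delta hsym hloc x)
  rw [energy_eq_zero_of_energy_self_eq_zero hnn hf.1 h0] at h
  simp [delta, Ne.symm hxy] at h

end IsDipole

end

theorem resistance_distance_is_metric_general {V : Type*} (c : V → V → ℝ)
    (hsym : ∀ x y, c x y = c y x) (hnn : ∀ x y, 0 ≤ c x y)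
    (hloc : ∀ x, (Function.support (c x)).Finite)
    (hconn : GraphConnected c)
    (v : V → V → (V → ℝ))
    (hvfin : ∀ x y, FiniteEnergy c (v x y))
    (hrep : ∀ x y (u : V → ℝ), FiniteEnergy c u →
      energy c (v x y) u = u x - u y) :
    (∀ x, energy c (v x x) (v x x) = 0) ∧
    (∀ x y, 0 ≤ energy c (v x y) (v x y)) ∧
    (∀ x y, energy c (v x y) (v x y) = energy c (v y x) (v y x)) ∧
    (∀ x y, energy c (v x y) (v x y) = 0 → x = y) ∧
    (∀ x y z, energy c (v x y) (v x y) ≤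
      energy c (v x z) (v x z) + energy c (v z y) (v z y)) := by
  have hv : ∀ x y, IsDipole c (v x y) x y := fun x y => ⟨hvfin x y, hrep x y⟩
  refine ⟨fun x => ?_, fun x y => energy_self_nonneg hnn _, fun x y => ?_,
    fun x y => (hv x y).eq_of_energy_self_eq_zero hnn hsym hloc,
    fun x y z => (hv x y).energy_self_le_add hnn hconn (hv x z) (hv z y)⟩
  · rw [(hv x x).energy_self, sub_self]
  · rw [(hv x y).energy_self, (hv y x).energy_self]
    linarith [(hv x y).reciprocity (hv y x)]

/-- `dist(x,y) = ‖v_{xy}‖²_{H_E}` defines a metric on `V`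
(the resistance distance), where `v_{xy}` is the dipole reproducing
`u(x) - u(y)` and `v_{xx} = 0`. -/
theorem resistance_distance_is_metric {V : Type*} [Countable V] (c : V → V → ℝ)
    (hsym : ∀ x y, c x y = c y x) (hnn : ∀ x y, 0 ≤ c x y)
    (hloop : ∀ x, c x x = 0)
    (hloc : ∀ x, (Function.support (c x)).Finite)
    (hconn : GraphConnected c)
    (v : V → V → (V → ℝ))
    (hvfin : ∀ x y, FiniteEnergy c (v x y))
    (hrep : ∀ x y (u : V → ℝ), FiniteEnergy c u →
      energy c (v x y) u = u x - u y)
    (hvxx : ∀ x, v x x = 0) :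
    (∀ x, energy c (v x x) (v x x) = 0) ∧
    (∀ x y, 0 ≤ energy c (v x y) (v x y)) ∧
    (∀ x y, energy c (v x y) (v x y) = energy c (v y x) (v y x)) ∧
    (∀ x y, energy c (v x y) (v x y) = 0 → x = y) ∧
    (∀ x y z, energy c (v x y) (v x y) ≤
      energy c (v x z) (v x z) + energy c (v z y) (v z y)) :=
  resistance_distance_is_metric_general c hsym hnn hloc hconn v hvfin hrep
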